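/- arXiv:2305.04077 — 2 statements merged into one kernel-verified Lean document; each statement's English description precedes it below -/
import Mathlib

section
/- Let $N > 1$ be an integer and for each $i \in \mathbb{Z}$ let $R_i$ be a rectangle in the plane of dimensions $1 \times N$ whose longest side is parallel to a unit vector $e_i = (e_{i,1}, e_{i,2})$ with $0 \leq |e_{i,1}| < 1/2$, and such that $R_i$ intersects the diagonal segment $\{(x,x) : x \in [i - 1/2, i + 1/2)\}$. With $Q_j$ and $\gamma_i$ as before, the function $h(y_1) = \sum_{i} \sum_{j \in \gamma_i} \chi_{[j_1-1/2, j_1+1/2)}(y_1)$ satisfies $\|h\|_\infty \leq C\, N \log N$ for an absolute constant $C$. -/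
open MeasureTheory Set Real
open scoped ENNReal

noncomputable section

/-- The rectangle with a vertex at `z`, side of length `a` along the unit vector `e`
and side of length `b` along the perpendicular vector `(-e.2, e.1)`. -/
def rectSet (e z : ℝ × ℝ) (a b : ℝ) : Set (ℝ × ℝ) :=
  (fun p : ℝ × ℝ => (z.1 + p.1 * e.1 - p.2 * e.2, z.2 + p.1 * e.2 + p.2 * e.1)) ''
    (Set.Icc 0 a ×ˢ Set.Icc 0 b)

/-- One-dimensional uncentered Hardy–Littlewood maximal function. -/
def maxHL (f : ℝ → ℝ) (x : ℝ) : ℝ≥0∞ :=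
  ⨆ (a : ℝ) (b : ℝ) (_ : a < x) (_ : x < b),
    (ENNReal.ofReal (b - a))⁻¹ * ∫⁻ y in Set.Ioo a b, ENNReal.ofReal |f y|

open scoped Classical

/-- The unit square `Q_j` centered at the integer point `j`. -/
def Qsq (j : ℤ × ℤ) : Set (ℝ × ℝ) :=
  Set.Ico ((j.1 : ℝ) - 1 / 2) ((j.1 : ℝ) + 1 / 2) ×ˢ
    Set.Ico ((j.2 : ℝ) - 1 / 2) ((j.2 : ℝ) + 1 / 2)

lemma mem_rectSet {e z p : ℝ×ℝ} {a b : ℝ} : p ∈ rectSet e z a b ↔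
    ∃ t s : ℝ, t ∈ Icc 0 a ∧ s ∈ Icc 0 b ∧ p.1 = z.1 + t*e.1 - s*e.2 ∧ p.2 = z.2 + t*e.2 + s*e.1 := by
  constructor
  · rintro ⟨⟨t,s⟩, ⟨ht, hs⟩, rfl⟩; exact ⟨t, s, ht, hs, rfl, rfl⟩
  · rintro ⟨t, s, ht, hs, h1, h2⟩
    exact ⟨(t,s), ⟨ht,hs⟩, Prod.ext h1.symm h2.symm⟩

lemma rect_key {e z : ℝ × ℝ} {a b : ℝ} {p q : ℝ × ℝ}
    (he : e.1 ^ 2 + e.2 ^ 2 = 1)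
    (hp : p ∈ rectSet e z a b) (hq : q ∈ rectSet e z a b) :
    |p.1 - q.1| ≤ a * |e.1| + b ∧
      ∃ t : ℝ, |t| ≤ a ∧ |t| * |e.1| ≤ |p.1 - q.1| + b ∧ |p.2 - q.2| ≤ |t| + b := by
  obtain ⟨t1, s1, ht1, hs1, hp1, hp2⟩ := mem_rectSet.mp hp
  obtain ⟨t2, s2, ht2, hs2, hq1, hq2⟩ := mem_rectSet.mp hq
  have he1 : |e.1| ≤ 1 := by nlinarith [sq_abs e.1, abs_nonneg e.1, sq_nonneg e.2]
  have he2 : |e.2| ≤ 1 := by nlinarith [sq_abs e.2, abs_nonneg e.2, sq_nonneg e.1]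
  set t := t1 - t2 with htdef
  set s := s1 - s2 with hsdef
  have ht : |t| ≤ a := abs_le.mpr ⟨by simp only [htdef]; linarith [ht1.1, ht1.2, ht2.1, ht2.2],
    by simp only [htdef]; linarith [ht1.1, ht1.2, ht2.1, ht2.2]⟩
  have hs : |s| ≤ b := abs_le.mpr ⟨by simp only [hsdef]; linarith [hs1.1, hs1.2, hs2.1, hs2.2],
    by simp only [hsdef]; linarith [hs1.1, hs1.2, hs2.1, hs2.2]⟩
  have e1 : p.1 - q.1 = t*e.1 - s*e.2 := by rw [hp1, hq1]; ring
  have e2 : p.2 - q.2 = t*e.2 + s*e.1 := by rw [hp2, hq2]; ring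
  have hta : 0 ≤ a := le_trans (abs_nonneg t) ht
  have A1 : |p.1 - q.1| ≤ a * |e.1| + b := by
    rw [e1]
    calc |t * e.1 - s * e.2| ≤ |t * e.1| + |s * e.2| := abs_sub _ _
    _ = |t| * |e.1| + |s| * |e.2| := by rw [abs_mul, abs_mul]
    _ ≤ a * |e.1| + b := by
        have := abs_nonneg e.1; have := abs_nonneg e.2; have := abs_nonneg s
        nlinarith
  refine ⟨A1, t, ht, ?_, ?_⟩
  · have h' : t * e.1 = (p.1 - q.1) + s * e.2 := by rw [e1]; ring
    calc |t| * |e.1| = |t * e.1| := (abs_mul _ _).symm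
    _ ≤ |p.1 - q.1| + |s * e.2| := by rw [h']; exact abs_add_le _ _
    _ ≤ |p.1 - q.1| + b := by
        rw [abs_mul]
        have := abs_nonneg e.2; have := abs_nonneg s
        nlinarith
  · rw [e2]
    calc |t * e.2 + s * e.1| ≤ |t * e.2| + |s * e.1| := abs_add_le _ _
    _ = |t| * |e.2| + |s| * |e.1| := by rw [abs_mul, abs_mul]
    _ ≤ |t| + b := by
        have := abs_nonneg e.1; have := abs_nonneg e.2; have := abs_nonneg s
        have := abs_nonneg t; nlinarith

lemma sum_inv_le_log (n : ℕ) : ∑ d ∈ Finset.Icc (1:ℤ) (n:ℤ), ((d:ℝ))⁻¹ ≤ 1 + Real.log n := by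
  induction n with
  | zero => simp
  | succ n ih =>
    have hins : Finset.Icc (1:ℤ) ((n:ℤ)+1) = insert ((n:ℤ)+1) (Finset.Icc (1:ℤ) (n:ℤ)) := by
      ext x; simp only [Finset.mem_Icc, Finset.mem_insert]; omega
    have hnotmem : ((n:ℤ)+1) ∉ Finset.Icc (1:ℤ) (n:ℤ) := by simp
    push_cast
    rw [hins, Finset.sum_insert hnotmem]
    rcases Nat.eq_zero_or_pos n with h0 | hpos
    · subst h0; norm_num
    · have hn1 : (0:ℝ) < n := by exact_mod_cast hpos
      have hlog : Real.log n + ((n:ℝ)+1)⁻¹ ≤ Real.log ((n:ℝ)+1) := by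
        have hd : Real.log ((n:ℝ)/((n:ℝ)+1)) ≤ (n:ℝ)/((n:ℝ)+1) - 1 :=
          Real.log_le_sub_one_of_pos (by positivity)
        rw [Real.log_div (ne_of_gt hn1) (by positivity)] at hd
        have heq : (n:ℝ)/((n:ℝ)+1) - 1 = -(((n:ℝ)+1)⁻¹) := by field_simp; ring
        rw [heq] at hd; linarith
      push_cast
      push_cast at ih
      linarith

set_option maxHeartbeats 1000000 in
/-- if for each `i ∈ ℤ`, `R_i` is a `1 × N` rectangle whose long side is
parallel to a unit vector `e_i` with `|e_{i,1}| < 1/2` and which meets the diagonal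
segment over `[i - 1/2, i + 1/2)`, then the counting function
`h(y₁) = ∑_i ∑_{j ∈ γ_i} χ_{[j₁-1/2, j₁+1/2)}(y₁)` is bounded by `C N log N`. -/
theorem statement5 :
    ∃ C : ℝ, 0 < C ∧ ∀ N : ℕ, 1 < N →
      ∀ e z : ℤ → ℝ × ℝ,
      (∀ i, (e i).1 ^ 2 + (e i).2 ^ 2 = 1) →
      (∀ i, |(e i).1| < 1 / 2) →
      (∀ i : ℤ, ∃ x : ℝ, x ∈ Set.Ico ((i : ℝ) - 1 / 2) ((i : ℝ) + 1 / 2) ∧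
        (x, x) ∈ rectSet (e i) (z i) N 1) →
      ∀ y1 : ℝ,
        (∑' i : ℤ, ∑' j : ℤ × ℤ,
            (if (Qsq j ∩ rectSet (e i) (z i) N 1).Nonempty ∧
                y1 ∈ Set.Ico ((j.1 : ℝ) - 1 / 2) ((j.1 : ℝ) + 1 / 2)
              then (1 : ℝ≥0∞) else 0)) ≤
          ENNReal.ofReal (C * N * Real.log N) := by
  refine ⟨300, by norm_num, ?_⟩
  intro N hN e z he hlt hdiag y1
  have hN2 : (2:ℝ) ≤ (N:ℝ) := by exact_mod_cast hN
  set m : ℤ := ⌊y1 + 1/2⌋ with hmdef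
  have hml : (m:ℝ) - 1/2 ≤ y1 := by
    have := Int.floor_le (y1 + 1/2); rw [← hmdef] at this; linarith
  have hmr : y1 < (m:ℝ) + 1/2 := by
    have := Int.lt_floor_add_one (y1 + 1/2); rw [← hmdef] at this; linarith
  have huniq : ∀ j1 : ℤ, y1 ∈ Set.Ico ((j1:ℝ) - 1/2) ((j1:ℝ)+1/2) → j1 = m := by
    intro j1 hj
    obtain ⟨h1, h2⟩ := hj
    have b1 : j1 < m + 1 := by exact_mod_cast show (j1:ℝ) < (m:ℝ) + 1 by push_cast; linarith
    have b2 : m < j1 + 1 := by exact_mod_cast show (m:ℝ) < (j1:ℝ) + 1 by push_cast; linarith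
    omega
  -- inner reduction
  have inner_eq : ∀ i : ℤ, (∑' j : ℤ × ℤ,
      (if (Qsq j ∩ rectSet (e i) (z i) N 1).Nonempty ∧
          y1 ∈ Set.Ico ((j.1 : ℝ) - 1 / 2) ((j.1 : ℝ) + 1 / 2)
        then (1 : ℝ≥0∞) else 0)) =
      ∑' j2 : ℤ, (if (Qsq (m, j2) ∩ rectSet (e i) (z i) N 1).Nonempty then (1:ℝ≥0∞) else 0) := by
    intro i
    rw [ENNReal.tsum_prod']
    refine (tsum_eq_single m ?_).trans ?_
    · intro b hb
      have hz : ∀ j2 : ℤ, (if (Qsq (b,j2) ∩ rectSet (e i) (z i) N 1).Nonempty ∧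
          y1 ∈ Set.Ico (((b,j2).1 : ℝ) - 1 / 2) (((b,j2).1 : ℝ) + 1 / 2)
            then (1 : ℝ≥0∞) else 0) = 0 := by
        intro j2
        rw [if_neg]
        rintro ⟨-, hy⟩
        exact hb (huniq b hy)
      simp only [hz, tsum_zero]
    · apply tsum_congr; intro j2
      have hy : y1 ∈ Set.Ico (((m,j2).1 : ℝ) - 1/2) (((m,j2).1 : ℝ)+1/2) := ⟨hml, hmr⟩
      rw [if_congr (and_iff_left hy) rfl rfl]
  -- geometric key fact
  have key : ∀ i : ℤ, (∃ j2 : ℤ, (Qsq (m, j2) ∩ rectSet (e i) (z i) N 1).Nonempty) →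
      |(i:ℝ) - (m:ℝ)| ≤ (N:ℝ) * |(e i).1| + 2 := by
    rintro i ⟨j2, p, hpQ, hpR⟩
    obtain ⟨x, hx, hxR⟩ := hdiag i
    have hk := (rect_key (he i) hpR hxR).1
    obtain ⟨⟨hp1l, hp1r⟩, -⟩ := hpQ
    obtain ⟨hxl, hxr⟩ := hx
    have hk' := abs_le.mp hk
    have hc1 := hk'.1
    have hc2 := hk'.2
    simp only at hp1l hp1r hc1 hc2
    rw [abs_le]
    constructor <;> [linarith; linarith]
  have hBpos : ∀ i : ℤ, (0:ℝ) < max 1 |(i:ℝ) - (m:ℝ)| :=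
    fun i => lt_of_lt_of_le one_pos (le_max_left _ _)
  -- count bound for each i
  have count : ∀ i : ℤ,
      (∑' j2 : ℤ, (if (Qsq (m, j2) ∩ rectSet (e i) (z i) N 1).Nonempty then (1:ℝ≥0∞) else 0))
        ≤ ENNReal.ofReal (12*(N:ℝ)/(max 1 |(i:ℝ) - (m:ℝ)|) + 7) := by
    intro i
    by_cases hS : ∃ j2 : ℤ, (Qsq (m, j2) ∩ rectSet (e i) (z i) N 1).Nonempty
    swap
    · have hz : (∑' j2 : ℤ, (if (Qsq (m, j2) ∩ rectSet (e i) (z i) N 1).Nonempty then (1:ℝ≥0∞) else 0)) = 0 :=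
        ENNReal.tsum_eq_zero.mpr (fun j2 => if_neg (fun h => hS ⟨j2, h⟩))
      rw [hz]; exact zero_le
    obtain ⟨j0, p0, hp0Q, hp0R⟩ := hS
    have dist_est : ∀ j2 : ℤ, (Qsq (m, j2) ∩ rectSet (e i) (z i) N 1).Nonempty →
        ∃ t : ℝ, |t| ≤ (N:ℝ) ∧ |t| * |(e i).1| ≤ 2 ∧ |(j2:ℝ) - (j0:ℝ)| ≤ |t| + 2 := by
      rintro j2 ⟨p, hpQ, hpR⟩
      obtain ⟨-, t, ht, ht1, ht2⟩ := rect_key (he i) hpR hp0R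
      obtain ⟨⟨a1,a2⟩, ⟨c1,c2⟩⟩ := hpQ
      obtain ⟨⟨b1,b2⟩, ⟨d1,d2⟩⟩ := hp0Q
      simp only at a1 a2 b1 b2 c1 c2 d1 d2
      refine ⟨t, ht, ?_, ?_⟩
      · have habs : |p.1 - p0.1| ≤ 1 := abs_le.mpr ⟨by linarith, by linarith⟩
        linarith
      · have h2 := abs_le.mp ht2
        exact abs_le.mpr ⟨by linarith [h2.1, h2.2], by linarith [h2.1, h2.2]⟩
    have main : ∃ K : ℕ, (∀ j2 : ℤ, (Qsq (m, j2) ∩ rectSet (e i) (z i) N 1).Nonempty →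
        |(j2:ℝ) - (j0:ℝ)| ≤ (K:ℝ)) ∧
        2*(K:ℝ) + 1 ≤ 12*(N:ℝ)/(max 1 |(i:ℝ) - (m:ℝ)|) + 7 := by
      rcases le_or_gt 3 |(i:ℝ) - (m:ℝ)| with hD | hD
      · have hkey := key i ⟨j0, p0, hp0Q, hp0R⟩
        have hNpos : (0:ℝ) < (N:ℝ) := by linarith
        have hc : (|(i:ℝ) - (m:ℝ)| - 2)/(N:ℝ) ≤ |(e i).1| := by
          rw [div_le_iff₀ hNpos]; linarith
        have hcpos : (0:ℝ) < |(e i).1| :=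
          lt_of_lt_of_le (div_pos (by linarith) hNpos) hc
        refine ⟨⌈2/|(e i).1| + 2⌉₊, ?_, ?_⟩
        · intro j2 hj2
          obtain ⟨t, ht, ht1, ht2⟩ := dist_est j2 hj2
          have htc : |t| ≤ 2 / |(e i).1| := by rw [le_div_iff₀ hcpos]; exact ht1
          calc |(j2:ℝ) - (j0:ℝ)| ≤ |t| + 2 := ht2
          _ ≤ 2/|(e i).1| + 2 := by linarith
          _ ≤ (⌈2/|(e i).1| + 2⌉₊ : ℝ) := Nat.le_ceil _
        · have hceil : ((⌈2/|(e i).1| + 2⌉₊ : ℕ) : ℝ) < (2/|(e i).1| + 2) + 1 :=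
            Nat.ceil_lt_add_one (by positivity)
          have h1 : 2/|(e i).1| ≤ 2*(N:ℝ)/(|(i:ℝ) - (m:ℝ)| - 2) := by
            rw [div_le_div_iff₀ hcpos (by linarith)]
            have hd2 := (div_le_iff₀ hNpos).mp hc
            nlinarith
          have h2 : 4*(N:ℝ)/(|(i:ℝ) - (m:ℝ)| - 2) ≤ 12*(N:ℝ)/|(i:ℝ) - (m:ℝ)| := by
            rw [div_le_div_iff₀ (by linarith) (by linarith)]
            nlinarith
          have hmaxD : max 1 |(i:ℝ) - (m:ℝ)| = |(i:ℝ) - (m:ℝ)| := max_eq_right (by linarith)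
          rw [hmaxD]
          have h3 : 4/|(e i).1| ≤ 4*(N:ℝ)/(|(i:ℝ) - (m:ℝ)| - 2) := by
            have : (4:ℝ)/|(e i).1| = 2*(2/|(e i).1|) := by ring
            rw [this]
            have : 4*(N:ℝ)/(|(i:ℝ) - (m:ℝ)| - 2) = 2*(2*(N:ℝ)/(|(i:ℝ) - (m:ℝ)| - 2)) := by ring
            rw [this]
            linarith
          have h4 : (4:ℝ)/|(e i).1| = 2*(2/|(e i).1|) := by ring
          linarith
      · refine ⟨N+2, ?_, ?_⟩
        · intro j2 hj2
          obtain ⟨t, ht, ht1, ht2⟩ := dist_est j2 hj2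
          push_cast
          linarith
        · have hmax3 : max 1 |(i:ℝ)-(m:ℝ)| ≤ 3 := max_le (by norm_num) hD.le
          have hdiv : 12*(N:ℝ)/3 ≤ 12*(N:ℝ)/(max 1 |(i:ℝ)-(m:ℝ)|) := by
            gcongr
          push_cast
          linarith
    obtain ⟨K, hK1, hK2⟩ := main
    have hsupp : ∀ j2 ∉ Finset.Icc (j0 - (K:ℤ)) (j0 + (K:ℤ)),
        (if (Qsq (m, j2) ∩ rectSet (e i) (z i) N 1).Nonempty then (1:ℝ≥0∞) else 0) = 0 := by
      intro j2 hj2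
      rw [if_neg]
      intro h
      apply hj2
      have habs := abs_le.mp (hK1 j2 h)
      rw [Finset.mem_Icc]
      constructor
      · exact_mod_cast show ((j0:ℝ) - (K:ℝ) ≤ (j2:ℝ)) by linarith [habs.1]
      · exact_mod_cast show ((j2:ℝ) ≤ (j0:ℝ) + (K:ℝ)) by linarith [habs.2]
    rw [tsum_eq_sum hsupp]
    have hcard : (Finset.Icc (j0 - (K:ℤ)) (j0 + (K:ℤ))).card = 2*K+1 := by
      rw [Int.card_Icc]; omega
    calc ∑ j2 ∈ Finset.Icc (j0 - (K:ℤ)) (j0 + (K:ℤ)),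
        (if (Qsq (m, j2) ∩ rectSet (e i) (z i) N 1).Nonempty then (1:ℝ≥0∞) else 0)
        ≤ (Finset.Icc (j0 - (K:ℤ)) (j0 + (K:ℤ))).card • (1:ℝ≥0∞) :=
          Finset.sum_le_card_nsmul _ _ _ (fun x _ => by split <;> simp)
    _ = ((2*K+1 : ℕ) : ℝ≥0∞) := by rw [hcard]; simp
    _ ≤ ENNReal.ofReal (12*(N:ℝ)/(max 1 |(i:ℝ) - (m:ℝ)|) + 7) := by
        rw [← ENNReal.ofReal_natCast]
        apply ENNReal.ofReal_le_ofReal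
        push_cast
        linarith
  -- outer support
  have outer : ∀ i ∉ Finset.Icc (m - ((N:ℤ)+2)) (m + ((N:ℤ)+2)),
      (∑' j2 : ℤ, (if (Qsq (m, j2) ∩ rectSet (e i) (z i) N 1).Nonempty then (1:ℝ≥0∞) else 0)) = 0 := by
    intro i hi
    apply ENNReal.tsum_eq_zero.mpr
    intro j2
    rw [if_neg]
    intro h
    apply hi
    have hkey := key i ⟨j2, h⟩
    have he1 : |(e i).1| ≤ 1 := by
      nlinarith [sq_abs (e i).1, abs_nonneg (e i).1, sq_nonneg (e i).2, he i]
    have habs : |(i:ℝ) - (m:ℝ)| ≤ (N:ℝ) + 2 := by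
      nlinarith [abs_nonneg ((i:ℝ) - (m:ℝ)), abs_nonneg (e i).1]
    have h2 := abs_le.mp habs
    rw [Finset.mem_Icc]
    constructor
    · exact_mod_cast show ((m:ℝ) - ((N:ℝ)+2) ≤ (i:ℝ)) by linarith [h2.1]
    · exact_mod_cast show ((i:ℝ) ≤ (m:ℝ) + ((N:ℝ)+2)) by linarith [h2.2]
  -- the real sum estimate
  have realsum : ∑ i ∈ Finset.Icc (m - ((N:ℤ)+2)) (m + ((N:ℤ)+2)),
      (12*(N:ℝ)/(max 1 |(i:ℝ) - (m:ℝ)|) + 7) ≤ 300 * (N:ℝ) * Real.log N := by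
    have htrans : ∑ i ∈ Finset.Icc (m - ((N:ℤ)+2)) (m + ((N:ℤ)+2)),
        (12*(N:ℝ)/(max 1 |(i:ℝ) - (m:ℝ)|) + 7)
        = ∑ d ∈ Finset.Icc (-((N:ℤ)+2)) ((N:ℤ)+2), (12*(N:ℝ)/(max 1 |(d:ℝ)|) + 7) := by
      rw [show m - ((N:ℤ)+2) = m + -((N:ℤ)+2) by ring, ← Finset.map_add_left_Icc, Finset.sum_map]
      apply Finset.sum_congr rfl
      intro d _
      have hcast : ((m + d : ℤ):ℝ) - (m:ℝ) = (d:ℝ) := by push_cast; ring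
      rw [addLeftEmbedding_apply, hcast]
    rw [htrans]
    set g : ℤ → ℝ := fun d => (max 1 |(d:ℝ)|)⁻¹ with hg
    have hgnn : ∀ d : ℤ, 0 ≤ g d := fun d => by
      rw [hg]; positivity
    have hsplit : ∑ d ∈ Finset.Icc (-((N:ℤ)+2)) ((N:ℤ)+2), g d
        ≤ 2 * (2 + Real.log ((N:ℝ)+2)) := by
      have hunion : Finset.Icc (-((N:ℤ)+2)) ((N:ℤ)+2)
          = Finset.Icc (-((N:ℤ)+2)) 0 ∪ Finset.Icc 0 ((N:ℤ)+2) := by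
        ext x; simp only [Finset.mem_Icc, Finset.mem_union]; omega
      rw [hunion]
      have hui := Finset.sum_union_inter (s₁ := Finset.Icc (-((N:ℤ)+2)) 0)
        (s₂ := Finset.Icc 0 ((N:ℤ)+2)) (f := g)
      have hinter_nn : 0 ≤ ∑ d ∈ Finset.Icc (-((N:ℤ)+2)) 0 ∩ Finset.Icc 0 ((N:ℤ)+2), g d :=
        Finset.sum_nonneg fun d _ => hgnn d
      have hneg : ∑ d ∈ Finset.Icc (-((N:ℤ)+2)) 0, g d = ∑ d ∈ Finset.Icc 0 ((N:ℤ)+2), g d := by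
        refine Finset.sum_nbij' (fun d => -d) (fun d => -d) ?_ ?_ ?_ ?_ ?_
        · intro a ha; rw [Finset.mem_Icc] at ha ⊢; omega
        · intro a ha; rw [Finset.mem_Icc] at ha ⊢; omega
        · intro a _; ring
        · intro a _; ring
        · intro a _
          rw [hg]
          dsimp only
          rw [Int.cast_neg, abs_neg]
      have hup : ∑ d ∈ Finset.Icc (0:ℤ) ((N:ℤ)+2), g d ≤ 2 + Real.log ((N:ℝ)+2) := by
        have hins : Finset.Icc (0:ℤ) ((N:ℤ)+2) = insert 0 (Finset.Icc 1 ((N:ℤ)+2)) := by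
          ext x; simp only [Finset.mem_Icc, Finset.mem_insert]; omega
        rw [hins, Finset.sum_insert (by simp)]
        have hg0 : g 0 = 1 := by rw [hg]; norm_num
        have hgd : ∀ d ∈ Finset.Icc (1:ℤ) ((N:ℤ)+2), g d = ((d:ℝ))⁻¹ := by
          intro d hd; rw [Finset.mem_Icc] at hd
          have h1 : (1:ℝ) ≤ (d:ℝ) := by exact_mod_cast hd.1
          rw [hg]
          simp only []
          rw [abs_of_nonneg (by linarith : (0:ℝ) ≤ (d:ℝ)), max_eq_right h1]
        rw [hg0, Finset.sum_congr rfl hgd]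
        have hle := sum_inv_le_log (N+2)
        have hcast : ((N+2:ℕ):ℤ) = (N:ℤ)+2 := by push_cast; ring
        have hcast2 : ((N+2:ℕ):ℝ) = (N:ℝ)+2 := by push_cast; ring
        rw [hcast, hcast2] at hle
        linarith
      linarith
    have hcard : (Finset.Icc (-((N:ℤ)+2)) ((N:ℤ)+2)).card = 2*N+5 := by
      rw [Int.card_Icc]; omega
    have hdecomp : ∑ d ∈ Finset.Icc (-((N:ℤ)+2)) ((N:ℤ)+2), (12*(N:ℝ)/(max 1 |(d:ℝ)|) + 7)
        = 12*(N:ℝ) * (∑ d ∈ Finset.Icc (-((N:ℤ)+2)) ((N:ℤ)+2), g d) + ((2*N+5 : ℕ) : ℝ) * 7 := by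
      have hterm : ∀ d ∈ Finset.Icc (-((N:ℤ)+2)) ((N:ℤ)+2),
          12*(N:ℝ)/(max 1 |(d:ℝ)|) = 12*(N:ℝ) * g d := by
        intro d _
        rw [hg, div_eq_mul_inv]
      rw [Finset.sum_add_distrib, Finset.sum_const, hcard, Finset.sum_congr rfl hterm,
        ← Finset.mul_sum, nsmul_eq_mul]
    rw [hdecomp]
    have hlogN2 : Real.log ((N:ℝ)+2) ≤ 2 * Real.log N := by
      have h1 : (N:ℝ)+2 ≤ (N:ℝ)^2 := by nlinarith [hN2]
      have h2 := Real.log_le_log (by positivity) h1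
      rw [Real.log_pow] at h2
      push_cast at h2
      linarith
    have hlog2 : (0.69:ℝ) ≤ Real.log N := by
      have h1 := Real.log_two_gt_d9
      have h2 : Real.log 2 ≤ Real.log N := Real.log_le_log (by norm_num) hN2
      linarith
    have hgs_nn : 0 ≤ ∑ d ∈ Finset.Icc (-((N:ℤ)+2)) ((N:ℤ)+2), g d :=
      Finset.sum_nonneg fun d _ => hgnn d
    have hNn : (0:ℝ) ≤ 12*(N:ℝ) := by linarith
    have hmul := mul_le_mul_of_nonneg_left hsplit hNn
    have hint2 := mul_le_mul_of_nonneg_left hlogN2 (show (0:ℝ) ≤ 24*(N:ℝ) by linarith)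
    have hq : 0.69 * (N:ℝ) ≤ (N:ℝ) * Real.log N := by
      calc 0.69 * (N:ℝ) = (N:ℝ) * 0.69 := by ring
      _ ≤ (N:ℝ) * Real.log N := mul_le_mul_of_nonneg_left hlog2 (by linarith)
    push_cast
    linarith [hmul, hint2, hq, hN2]
  -- assemble
  refine le_trans (le_of_eq (tsum_congr inner_eq)) ?_
  rw [tsum_eq_sum outer]
  refine le_trans (Finset.sum_le_sum fun i _ => count i) ?_
  rw [← ENNReal.ofReal_sum_of_nonneg (fun i _ => by positivity)]
  exact ENNReal.ofReal_le_ofReal realsum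
end
end

section
/- Let $N \geq 8$, $1 < p < \infty$, $p' = p/(p-1)$, and set $f_N(x) = x^{-2/p}\chi_{[3,N]}(x)$, $g_N(x) = x^{-2/p'}\chi_{[3,N]}(x)$. Then $\|\mathcal{M}_{\mathcal{R}_N}(f_N, g_N)\|_{L^1(\mathbb{R})} \geq c \log N$ while $\|f_N\|_p \|g_N\|_{p'} \leq C$, so $\|\mathcal{M}_{\mathcal{R}_N}\|_{L^p \times L^{p'} \to L^1} \geq c' \log N$. -/
open MeasureTheory Set Real
open scoped ENNReal Pointwise

noncomputable section

/-- The bilinear Kakeya maximal function `𝓜_{𝓡_N}` over all rectangles of dimensions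
`δ × δk`, `δ > 0`, `1 ≤ k ≤ N`, containing the diagonal point `(x,x)`. -/
def bilKakN (N : ℝ) (f g : ℝ → ℝ) (x : ℝ) : ℝ≥0∞ :=
  ⨆ (k : ℕ) (_ : 1 ≤ k) (_ : (k : ℝ) ≤ N) (δ : ℝ) (_ : 0 < δ) (e : ℝ × ℝ) (z : ℝ × ℝ)
      (_ : e.1 ^ 2 + e.2 ^ 2 = 1) (_ : (x, x) ∈ rectSet e z (δ * k) δ),
    (volume (rectSet e z (δ * k) δ))⁻¹ *
      ∫⁻ y in rectSet e z (δ * k) δ, ENNReal.ofReal |f y.1| * ENNReal.ofReal |g y.2|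

def rotL (e : ℝ × ℝ) : (ℝ × ℝ) →ₗ[ℝ] (ℝ × ℝ) where
  toFun p := (p.1 * e.1 - p.2 * e.2, p.1 * e.2 + p.2 * e.1)
  map_add' p q := by ext <;> simp <;> ring
  map_smul' c p := by ext <;> simp <;> ring

lemma det_rotL (e : ℝ × ℝ) (he : e.1 ^ 2 + e.2 ^ 2 = 1) : LinearMap.det (rotL e) = 1 := by
  rw [← LinearMap.det_toMatrix (Module.Basis.finTwoProd ℝ), Matrix.det_fin_two]
  simp [LinearMap.toMatrix_apply, rotL, Module.Basis.finTwoProd_zero, Module.Basis.finTwoProd_one]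
  nlinarith [he]

lemma rectSet_eq (e z : ℝ × ℝ) (a b : ℝ) :
    rectSet e z a b = z +ᵥ (rotL e '' (Set.Icc 0 a ×ˢ Set.Icc 0 b)) := by
  rw [← Set.image_vadd, Set.image_image]
  apply Set.image_congr'
  intro p
  simp only [rotL, LinearMap.coe_mk, AddHom.coe_mk, Prod.ext_iff]
  constructor <;> simp <;> ring

lemma volume_rectSet (e z : ℝ × ℝ) (he : e.1 ^ 2 + e.2 ^ 2 = 1) (a b : ℝ) :
    volume (rectSet e z a b) = ENNReal.ofReal a * ENNReal.ofReal b := by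
  rw [rectSet_eq, measure_vadd, Measure.addHaar_image_linearMap, det_rotL e he,
    Measure.volume_eq_prod, Measure.prod_prod]
  simp [Real.volume_Icc]

set_option maxHeartbeats 1000000 in
lemma bilKak_lower (N : ℕ) (hN : 8 ≤ N) (p q : ℝ) (hp : 1 ≤ p) (hq : 1 ≤ q)
    (f g : ℝ → ℝ)
    (hf : f = fun x : ℝ => if 3 ≤ x ∧ x ≤ (N:ℝ) then x ^ (-(2/p)) else 0)
    (hg : g = fun x : ℝ => if 3 ≤ x ∧ x ≤ (N:ℝ) then x ^ (-(2/q)) else 0)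
    (x : ℝ) (hx : 6 < x) (hxN : (x - 3) * Real.sqrt 2 ≤ N) :
    ENNReal.ofReal (1 / (1296 * x)) ≤ bilKakN N f g x := by
  have hs0 : (0:ℝ) ≤ Real.sqrt 2 := Real.sqrt_nonneg 2
  have hss : Real.sqrt 2 * Real.sqrt 2 = 2 := Real.mul_self_sqrt (by norm_num)
  have hs1 : (1:ℝ) ≤ Real.sqrt 2 := by nlinarith
  have hs32 : Real.sqrt 2 ≤ 3/2 := by nlinarith
  set s : ℝ := Real.sqrt 2 / 2 with hsdef
  set e : ℝ × ℝ := (s, s) with hedef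
  set z : ℝ × ℝ := (3 + s, 3) with hzdef
  have hsnn : (0:ℝ) ≤ s := by rw [hsdef]; linarith
  have hs34 : s ≤ 3/4 := by rw [hsdef]; linarith
  have he : e.1 ^ 2 + e.2 ^ 2 = 1 := by
    simp only [hedef, hsdef]; linear_combination (1/2) * hss
  set k : ℕ := ⌈(x - 3) * Real.sqrt 2⌉₊ with hkdef
  have hkx : (x - 3) * Real.sqrt 2 ≤ (k:ℝ) := Nat.le_ceil _
  have hk2 : (2:ℝ) ≤ (k:ℝ) := by nlinarith
  have hk1 : 1 ≤ k := by
    have h : (1:ℝ) ≤ (k:ℝ) := by linarith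
    exact_mod_cast h
  have hkN : (k:ℝ) ≤ N := by
    rw [hkdef]; exact_mod_cast Nat.ceil_le.mpr (by exact_mod_cast hxN)
  have hmem : ((x:ℝ), x) ∈ rectSet e z (1 * k) 1 := by
    refine ⟨((x - 3) * Real.sqrt 2 - 1/2, 1/2), ?_, ?_⟩
    · constructor
      · constructor
        · nlinarith
        · simp only [one_mul]; nlinarith
      · constructor <;> norm_num
    · simp only [hedef, hzdef, Prod.ext_iff]
      constructor <;> · rw [hsdef]; linear_combination ((x-3)/2) * hss
  -- the subrectangle S near (3,3)
  have hSsub : rectSet e z 2 1 ⊆ rectSet e z (1 * k) 1 := by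
    apply Set.image_mono
    apply Set.prod_mono_left
    apply Set.Icc_subset_Icc_right
    simpa using hk2
  have hSmeas : MeasurableSet (rectSet e z 2 1) := by
    have : IsCompact (rectSet e z 2 1) := by
      apply (isCompact_Icc.prod isCompact_Icc).image
      fun_prop
    exact this.measurableSet
  have hptwise : ∀ y ∈ rectSet e z 2 1,
      (ENNReal.ofReal (1/1296) : ℝ≥0∞) ≤ ENNReal.ofReal |f y.1| * ENNReal.ofReal |g y.2| := by
    rintro y ⟨⟨u, v⟩, ⟨⟨hu0, hu2⟩, hv0, hv1⟩, rfl⟩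
    simp only at hu0 hu2 hv0 hv1 ⊢
    have hy1a : (3:ℝ) ≤ 3 + s + u * s - v * s := by
      nlinarith [mul_nonneg hsnn (show (0:ℝ) ≤ 1 + u - v by linarith)]
    have hy1b : 3 + s + u * s - v * s ≤ 6 := by
      nlinarith [mul_nonneg hsnn (show (0:ℝ) ≤ 3 - (1 + u - v) by linarith)]
    have hy2a : (3:ℝ) ≤ 3 + u * s + v * s := by
      nlinarith [mul_nonneg hsnn (show (0:ℝ) ≤ u + v by linarith)]
    have hy2b : 3 + u * s + v * s ≤ 6 := by
      nlinarith [mul_nonneg hsnn (show (0:ℝ) ≤ 3 - (u + v) by linarith)]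
    have key : ∀ r w : ℝ, 1 ≤ r → 3 ≤ w → w ≤ 6 →
        (1/36 : ℝ) ≤ (if 3 ≤ w ∧ w ≤ (N:ℝ) then w ^ (-(2/r)) else 0) := by
      intro r w hr hw3 hw6
      have hwN : w ≤ (N:ℝ) := le_trans hw6 (by exact_mod_cast le_trans (by norm_num) hN)
      rw [if_pos ⟨hw3, hwN⟩]
      have h1 : (6:ℝ) ^ (-(2/r)) ≤ w ^ (-(2/r)) :=
        Real.rpow_le_rpow_of_nonpos (by linarith) hw6
          (neg_nonpos.mpr (div_nonneg (by norm_num) (by linarith)))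
      have h2 : (6:ℝ) ^ (-2 : ℝ) ≤ (6:ℝ) ^ (-(2/r)) := by
        apply Real.rpow_le_rpow_of_exponent_le (by norm_num)
        have : 2/r ≤ 2 := by
          rw [div_le_iff₀ (by linarith)]; nlinarith
        linarith
      have h3 : (6:ℝ) ^ (-2 : ℝ) = 1/36 := by
        rw [show (-2:ℝ) = ((-2:ℤ):ℝ) by norm_num, Real.rpow_intCast]
        norm_num
      linarith [h1, h2]
    have hf1 := key p _ hp hy1a hy1b
    have hg1 := key q _ hq hy2a hy2b
    rw [hf, hg]
    simp only
    rw [abs_of_nonneg (le_trans (by norm_num) hf1),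
      abs_of_nonneg (le_trans (by norm_num) hg1)]
    calc (ENNReal.ofReal (1/1296) : ℝ≥0∞) = ENNReal.ofReal (1/36) * ENNReal.ofReal (1/36) := by
          rw [← ENNReal.ofReal_mul (by norm_num)]; norm_num
      _ ≤ _ := by
          exact mul_le_mul' (ENNReal.ofReal_le_ofReal hf1) (ENNReal.ofReal_le_ofReal hg1)
  have hvolR : volume (rectSet e z (1 * (k:ℝ)) 1) = ENNReal.ofReal (k:ℝ) := by
    rw [volume_rectSet e z he]; simp
  have hvolS : volume (rectSet e z 2 1) = ENNReal.ofReal 2 := by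
    rw [volume_rectSet e z he]; simp
  have hint : ENNReal.ofReal (1/1296) * ENNReal.ofReal 2 ≤
      ∫⁻ y in rectSet e z (1 * (k:ℝ)) 1,
        ENNReal.ofReal |f y.1| * ENNReal.ofReal |g y.2| := by
    calc ENNReal.ofReal (1/1296) * ENNReal.ofReal 2
        = ∫⁻ _ in rectSet e z 2 1, (ENNReal.ofReal (1/1296)) := by
          rw [setLIntegral_const, hvolS]
      _ ≤ ∫⁻ y in rectSet e z 2 1, ENNReal.ofReal |f y.1| * ENNReal.ofReal |g y.2| :=
          setLIntegral_mono' hSmeas hptwise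
      _ ≤ _ := lintegral_mono_set hSsub
  have hk2x : (k:ℝ) ≤ 2 * x := by
    have h1 : ((k:ℝ)) < (x - 3) * Real.sqrt 2 + 1 := by
      rw [hkdef]; exact_mod_cast Nat.ceil_lt_add_one (by nlinarith)
    nlinarith [mul_le_mul_of_nonneg_left hs32 (show (0:ℝ) ≤ x - 3 by linarith)]
  unfold bilKakN
  refine le_iSup_of_le k (le_iSup_of_le hk1 (le_iSup_of_le hkN (le_iSup_of_le (1:ℝ)
    (le_iSup_of_le one_pos (le_iSup_of_le e (le_iSup_of_le z (le_iSup_of_le he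
    (le_iSup_of_le hmem ?_))))))))
  rw [hvolR]
  calc ENNReal.ofReal (1/(1296*x))
      = (ENNReal.ofReal (2*x))⁻¹ * (ENNReal.ofReal (1/1296) * ENNReal.ofReal 2) := by
        rw [← ENNReal.ofReal_mul (by norm_num), ← ENNReal.ofReal_inv_of_pos (by linarith),
          ← ENNReal.ofReal_mul (by positivity)]
        congr 1
        field_simp
    _ ≤ (ENNReal.ofReal (k:ℝ))⁻¹ *
        ∫⁻ y in rectSet e z (1 * (k:ℝ)) 1,
          ENNReal.ofReal |f y.1| * ENNReal.ofReal |g y.2| := by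
        gcongr

lemma lint_lower_aux (N : ℕ) (hN : 8 ≤ N) (p q : ℝ) (hp : 1 ≤ p) (hq : 1 ≤ q)
    (f g : ℝ → ℝ)
    (hf : f = fun x : ℝ => if 3 ≤ x ∧ x ≤ (N:ℝ) then x ^ (-(2/p)) else 0)
    (hg : g = fun x : ℝ => if 3 ≤ x ∧ x ≤ (N:ℝ) then x ^ (-(2/q)) else 0)
    (M : ℝ) (hM6 : 6 < M)
    (hMN : ∀ x : ℝ, 6 < x → x < M → (x - 3) * Real.sqrt 2 ≤ N) :
    ENNReal.ofReal ((Real.log M - Real.log 6) / 1296) ≤ ∫⁻ x, bilKakN N f g x := by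
  have h1 : ∀ x ∈ Set.Ioo (6:ℝ) M, ENNReal.ofReal (1/(1296*x)) ≤ bilKakN N f g x :=
    fun x hx => bilKak_lower N hN p q hp hq f g hf hg x hx.1 (hMN x hx.1 hx.2)
  have hcont : ContinuousOn (fun x : ℝ => 1/(1296*x)) (Set.Icc 6 M) := by
    apply ContinuousOn.div continuousOn_const (by fun_prop)
    intro x hx
    have h6 : (6:ℝ) ≤ x := hx.1
    positivity
  have hfi : IntegrableOn (fun x : ℝ => 1/(1296*x)) (Set.Ioo 6 M) volume :=
    (hcont.integrableOn_Icc).mono_set Set.Ioo_subset_Icc_self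
  have hval : ∫ x in Set.Ioo (6:ℝ) M, 1/(1296*x) = (Real.log M - Real.log 6)/1296 := by
    rw [← integral_Ioc_eq_integral_Ioo, ← intervalIntegral.integral_of_le (by linarith)]
    have hrw : ∀ x:ℝ, 1/(1296*x) = (1/1296) * (1/x) := by intro x; ring
    simp_rw [hrw]
    rw [intervalIntegral.integral_const_mul, integral_one_div ?h0]
    case h0 =>
      rw [Set.uIcc_of_le (by linarith)]
      intro h0
      exact absurd h0.1 (by norm_num)
    rw [Real.log_div (by linarith) (by norm_num)]
    ring
  calc ENNReal.ofReal ((Real.log M - Real.log 6)/1296)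
      = ∫⁻ x in Set.Ioo (6:ℝ) M, ENNReal.ofReal (1/(1296*x)) := by
        rw [← hval, ofReal_integral_eq_lintegral_ofReal hfi ?nn]
        case nn =>
          apply ae_restrict_of_forall_mem measurableSet_Ioo
          intro x hx
          have h6 : (6:ℝ) < x := hx.1
          positivity
    _ ≤ ∫⁻ x in Set.Ioo (6:ℝ) M, bilKakN N f g x := setLIntegral_mono' measurableSet_Ioo h1
    _ ≤ ∫⁻ x, bilKakN N f g x := setLIntegral_le_lintegral _ _

lemma log_lower (N : ℕ) (hN : 8 ≤ N) (p q : ℝ) (hp : 1 ≤ p) (hq : 1 ≤ q)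
    (f g : ℝ → ℝ)
    (hf : f = fun x : ℝ => if 3 ≤ x ∧ x ≤ (N:ℝ) then x ^ (-(2/p)) else 0)
    (hg : g = fun x : ℝ => if 3 ≤ x ∧ x ≤ (N:ℝ) then x ^ (-(2/q)) else 0) :
    ENNReal.ofReal ((1/103680) * Real.log N) ≤ ∫⁻ x, bilKakN N f g x := by
  have hN0 : (8:ℝ) ≤ (N:ℝ) := by exact_mod_cast hN
  have hss : Real.sqrt 2 * Real.sqrt 2 = 2 := Real.mul_self_sqrt (by norm_num)
  have hs0 : (0:ℝ) ≤ Real.sqrt 2 := Real.sqrt_nonneg 2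
  have hs32 : Real.sqrt 2 ≤ 3/2 := by nlinarith
  rcases le_or_gt (N:ℝ) 144 with hc | hc
  · refine le_trans ?_ (lint_lower_aux N hN p q hp hq f g hf hg 7 (by norm_num) ?_)
    · apply ENNReal.ofReal_le_ofReal
      have h144 : Real.log N ≤ Real.log 144 := Real.log_le_log (by linarith) hc
      have h76 : (144:ℝ) ≤ (7/6)^(80:ℕ) := by norm_num
      have hl2 : Real.log 144 ≤ 80 * (Real.log 7 - Real.log 6) := by
        calc Real.log 144 ≤ Real.log ((7/6)^(80:ℕ)) := Real.log_le_log (by norm_num) h76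
          _ = 80 * Real.log (7/6) := by rw [Real.log_pow]; norm_num
          _ = 80 * (Real.log 7 - Real.log 6) := by
              rw [Real.log_div (by norm_num) (by norm_num)]
      linarith
    · intro x hx6 hx7
      nlinarith [mul_le_mul_of_nonneg_left hs32 (show (0:ℝ) ≤ x - 3 by linarith)]
  · refine le_trans ?_ (lint_lower_aux N hN p q hp hq f g hf hg ((N:ℝ)/2) (by linarith) ?_)
    · apply ENNReal.ofReal_le_ofReal
      have h12 : Real.log 12 = Real.log 2 + Real.log 6 := by
        rw [show (12:ℝ) = 2*6 by norm_num, Real.log_mul (by norm_num) (by norm_num)]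
      have h144 : Real.log 144 = 2 * Real.log 12 := by
        rw [show (144:ℝ) = 12^(2:ℕ) by norm_num, Real.log_pow]; norm_num
      have hlN : Real.log 144 ≤ Real.log N := Real.log_le_log (by norm_num) (by linarith)
      have hN2 : Real.log ((N:ℝ)/2) = Real.log N - Real.log 2 := by
        rw [Real.log_div (by linarith) (by norm_num)]
      have hlogN0 : 0 ≤ Real.log N := Real.log_nonneg (by linarith)
      have hlog12 : 0 ≤ Real.log 12 := Real.log_nonneg (by norm_num)
      linarith
    · intro x hx6 hxM
      nlinarith [mul_le_mul_of_nonneg_left hs32 (show (0:ℝ) ≤ x - 3 by linarith)]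

lemma eLp_le_one (N : ℕ) (hN : 8 ≤ N) (q : ℝ) (hq : 1 ≤ q) :
    eLpNorm (fun x : ℝ => if 3 ≤ x ∧ x ≤ (N:ℝ) then x ^ (-(2/q)) else 0)
      (ENNReal.ofReal q) volume ≤ 1 := by
  have hq0 : (0:ℝ) < q := by linarith
  have hN3 : (3:ℝ) ≤ (N:ℝ) := by
    have : (8:ℝ) ≤ (N:ℝ) := by exact_mod_cast hN
    linarith
  have hne0 : ENNReal.ofReal q ≠ 0 := by
    simp only [ne_eq, ENNReal.ofReal_eq_zero, not_le]; linarith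
  rw [eLpNorm_eq_lintegral_rpow_enorm_toReal hne0 ENNReal.ofReal_ne_top,
    ENNReal.toReal_ofReal hq0.le]
  apply ENNReal.rpow_le_one ?_ (by positivity)
  have hpt : (fun x : ℝ => (‖if 3 ≤ x ∧ x ≤ (N:ℝ) then x ^ (-(2/q)) else 0‖ₑ) ^ q)
      = (Set.Icc (3:ℝ) (N:ℝ)).indicator (fun x => ENNReal.ofReal (x ^ (-2:ℝ))) := by
    funext x
    by_cases hx : 3 ≤ x ∧ x ≤ (N:ℝ)
    · rw [if_pos hx, Set.indicator_of_mem (Set.mem_Icc.mpr hx)]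
      have hx0 : (0:ℝ) < x := by linarith [hx.1]
      rw [Real.enorm_eq_ofReal (Real.rpow_nonneg hx0.le _),
        ENNReal.ofReal_rpow_of_nonneg (Real.rpow_nonneg hx0.le _) hq0.le,
        ← Real.rpow_mul hx0.le, show -(2/q) * q = (-2:ℝ) by field_simp]
    · rw [if_neg hx, Set.indicator_of_notMem (by rwa [Set.mem_Icc])]
      simp [ENNReal.zero_rpow_of_pos hq0]
  rw [hpt, lintegral_indicator measurableSet_Icc]
  have hcont : ContinuousOn (fun x : ℝ => x ^ (-2:ℝ)) (Set.Icc 3 (N:ℝ)) :=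
    ContinuousOn.rpow_const continuousOn_id
      (fun x hx => Or.inl (by intro h; rw [h] at hx; exact absurd hx.1 (by norm_num)))
  have hfi : IntegrableOn (fun x : ℝ => x ^ (-2:ℝ)) (Set.Icc 3 (N:ℝ)) volume :=
    hcont.integrableOn_Icc
  rw [← ofReal_integral_eq_lintegral_ofReal hfi
    (ae_restrict_of_forall_mem measurableSet_Icc
      (fun x hx => Real.rpow_nonneg (by linarith [hx.1]) _))]
  apply ENNReal.ofReal_le_one.mpr
  have hval : ∫ x in Set.Icc (3:ℝ) (N:ℝ), x ^ (-2:ℝ)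
      = ((N:ℝ) ^ (-1:ℝ) - (3:ℝ) ^ (-1:ℝ)) / (-1) := by
    rw [integral_Icc_eq_integral_Ioc, ← intervalIntegral.integral_of_le hN3,
      integral_rpow (Or.inr ⟨by norm_num, ?_⟩)]
    · norm_num
    · rw [Set.uIcc_of_le hN3]
      intro h0
      exact absurd h0.1 (by norm_num)
  rw [hval, Real.rpow_neg_one, Real.rpow_neg_one]
  have : (0:ℝ) ≤ ((N:ℝ))⁻¹ := by positivity
  have h3 : ((3:ℝ))⁻¹ ≤ 1 := by norm_num
  rw [div_neg, div_one]
  linarith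


/-- for `f_N(x) = x^{-2/p} χ_{[3,N]}` and `g_N(x) = x^{-2/p'} χ_{[3,N]}`,
`‖𝓜_{𝓡_N}(f_N,g_N)‖₁ ≥ c log N` while `‖f_N‖_p ‖g_N‖_{p'} ≤ C`, so the
`L^p × L^{p'} → L¹` operator norm of `𝓜_{𝓡_N}` is at least `c' log N`. -/
theorem statement13 (p : ℝ) (hp : 1 < p) :
    ∃ c Cu c' : ℝ, 0 < c ∧ 0 < Cu ∧ 0 < c' ∧ ∀ N : ℕ, 8 ≤ N →
      ∀ f g : ℝ → ℝ,
      f = (fun x : ℝ => if 3 ≤ x ∧ x ≤ (N : ℝ) then x ^ (-(2 / p)) else 0) →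
      g = (fun x : ℝ => if 3 ≤ x ∧ x ≤ (N : ℝ) then x ^ (-(2 / (p / (p - 1)))) else 0) →
      ENNReal.ofReal (c * Real.log N) ≤ (∫⁻ x, bilKakN N f g x) ∧
      eLpNorm f (ENNReal.ofReal p) volume *
          eLpNorm g (ENNReal.ofReal (p / (p - 1))) volume ≤ ENNReal.ofReal Cu ∧
      ENNReal.ofReal (c' * Real.log N) *
          (eLpNorm f (ENNReal.ofReal p) volume *
            eLpNorm g (ENNReal.ofReal (p / (p - 1))) volume) ≤
        (∫⁻ x, bilKakN N f g x) := by

  refine ⟨1/103680, 1, 1/103680, by norm_num, by norm_num, by norm_num, ?_⟩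
  intro N hN f g hf hg
  have hq : 1 ≤ p / (p - 1) := by
    rw [le_div_iff₀ (by linarith)]; linarith
  have h1 : ENNReal.ofReal ((1/103680) * Real.log N) ≤ ∫⁻ x, bilKakN N f g x :=
    log_lower N hN p (p/(p-1)) hp.le hq f g hf hg
  have h2 : eLpNorm f (ENNReal.ofReal p) volume ≤ 1 := by
    rw [hf]; exact eLp_le_one N hN p hp.le
  have h3 : eLpNorm g (ENNReal.ofReal (p/(p-1))) volume ≤ 1 := by
    rw [hg]; exact eLp_le_one N hN _ hq
  have hprod : eLpNorm f (ENNReal.ofReal p) volume *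
      eLpNorm g (ENNReal.ofReal (p/(p-1))) volume ≤ 1 := by
    calc _ ≤ (1:ℝ≥0∞) * 1 := mul_le_mul' h2 h3
      _ = 1 := one_mul 1
  refine ⟨h1, by simpa using hprod, ?_⟩
  calc ENNReal.ofReal (1/103680 * Real.log N) *
        (eLpNorm f (ENNReal.ofReal p) volume *
          eLpNorm g (ENNReal.ofReal (p/(p-1))) volume)
      ≤ ENNReal.ofReal (1/103680 * Real.log N) * 1 := mul_le_mul_right hprod _
    _ = ENNReal.ofReal (1/103680 * Real.log N) := mul_one _
    _ ≤ _ := h1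
end
end
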